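/- Let δ > 0, let G₁ = (V,E₁) and G₂ = (V,E₂) be graphs on a common finite vertex set with maximum degree at most Δ, and let k > (6+δ)Δ. For every pair of colorings X, Y ∈ {1,…,k}^{V̂} that differ at exactly one vertex, there exists a coupling of the one-step transition distributions of the Glauber dynamics started from X and from Y under which E[Ĥ(X′,Y′)] ≤ (1 − δ/((6+δ)·m)) · Ĥ(X,Y). -/

import Mathlib

open Classical

noncomputable section

/-- The vertex set of the graph `Ĝ`: the edges of `G₁ ∪ G₂`. -/
abbrev HatVertex {V : Type} (G₁ G₂ : SimpleGraph V) : Type :=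
  {e : Sym2 V // e ∈ G₁.edgeSet ∪ G₂.edgeSet}

/-- The graph `Ĝ`: the union of the line graphs of `G₁` and `G₂`, identifying vertices
corresponding to edges appearing in both graphs.  Two distinct edges are adjacent iff they
share an endpoint and both lie in `E₁` or both lie in `E₂`. -/
def hatG {V : Type} (G₁ G₂ : SimpleGraph V) : SimpleGraph (HatVertex G₁ G₂) where
  Adj e f := e ≠ f ∧ (∃ x : V, x ∈ e.1 ∧ x ∈ f.1) ∧
    ((e.1 ∈ G₁.edgeSet ∧ f.1 ∈ G₁.edgeSet) ∨ (e.1 ∈ G₂.edgeSet ∧ f.1 ∈ G₂.edgeSet))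
  symm := by
    constructor
    rintro e f ⟨h1, ⟨x, hx1, hx2⟩, h3⟩
    exact ⟨h1.symm, ⟨x, hx2, hx1⟩, by tauto⟩
  loopless := by
    constructor
    rintro e ⟨h1, -, -⟩
    exact h1 rfl

instance {V : Type} [Fintype V] (G₁ G₂ : SimpleGraph V) : Fintype (HatVertex G₁ G₂) :=
  Fintype.ofFinite _

/-- The weight of a vertex of `Ĝ`: `2` if the corresponding edge lies in both graphs,
`1` otherwise. -/
def hatWeight {V : Type} (G₁ G₂ : SimpleGraph V) (e : HatVertex G₁ G₂) : ℕ :=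
  if e.1 ∈ G₁.edgeSet ∧ e.1 ∈ G₂.edgeSet then 2 else 1

/-- A proper vertex coloring of a graph. -/
def IsProperVertexColoring {α β : Type} (H : SimpleGraph α) (σ : α → β) : Prop :=
  ∀ u w, H.Adj u w → σ u ≠ σ w

/-- A simultaneous edge `k`-coloring of the pair `(G₁, G₂)`. -/
def IsSimultaneousEdgeColoring {V : Type} (G₁ G₂ : SimpleGraph V) {k : ℕ}
    (φ : HatVertex G₁ G₂ → Fin k) : Prop :=
  (∀ e f : HatVertex G₁ G₂, e.1 ∈ G₁.edgeSet → f.1 ∈ G₁.edgeSet → e ≠ f →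
      (∃ x : V, x ∈ e.1 ∧ x ∈ f.1) → φ e ≠ φ f) ∧
  (∀ e f : HatVertex G₁ G₂, e.1 ∈ G₂.edgeSet → f.1 ∈ G₂.edgeSet → e ≠ f →
      (∃ x : V, x ∈ e.1 ∧ x ∈ f.1) → φ e ≠ φ f)

/-- The weighted Hamming distance `Ĥ`. -/
def hatH {V : Type} [Fintype V] (G₁ G₂ : SimpleGraph V) {k : ℕ}
    (σ τ : HatVertex G₁ G₂ → Fin k) : ℝ :=
  ∑ v : HatVertex G₁ G₂, if σ v ≠ τ v then (hatWeight G₁ G₂ v : ℝ) else 0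

/-- One step of a Markov chain applied to a distribution. -/
def stepDist {Ω : Type} [Fintype Ω] (P : Ω → Ω → ℝ) (μ : Ω → ℝ) : Ω → ℝ :=
  fun τ => ∑ σ, μ σ * P σ τ

/-- Total variation distance between two distributions on a finite state space. -/
def tvDist {Ω : Type} [Fintype Ω] (μ ν : Ω → ℝ) : ℝ :=
  (∑ x, |μ x - ν x|) / 2

/-- The point mass at a state. -/
def deltaDist {Ω : Type} (x : Ω) : Ω → ℝ :=
  fun y => if y = x then 1 else 0

/-- A coupling of two distributions on a finite set. -/
def IsCoupling {Ω : Type} [Fintype Ω] (γ : Ω × Ω → ℝ) (μ ν : Ω → ℝ) : Prop :=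
  (∀ q, 0 ≤ γ q) ∧ (∀ a, ∑ b, γ (a, b) = μ a) ∧ (∀ b, ∑ a, γ (a, b) = ν b)

/-- The result of a Glauber update at `(v, c)`: recolor `v` with `c` provided no
`Ĝ`-neighbor of `v` has color `c`. -/
def glauberStep {V : Type} (G₁ G₂ : SimpleGraph V) {k : ℕ}
    (σ : HatVertex G₁ G₂ → Fin k) (v : HatVertex G₁ G₂) (c : Fin k) :
    HatVertex G₁ G₂ → Fin k :=
  if ∀ w, (hatG G₁ G₂).Adj v w → σ w ≠ c then Function.update σ v c else σ

/-- The transition matrix of the Glauber dynamics on `{1,…,k}^{V̂}`. -/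
def glauberP {V : Type} [Fintype V] (G₁ G₂ : SimpleGraph V) (k : ℕ)
    (σ τ : HatVertex G₁ G₂ → Fin k) : ℝ :=
  (∑ v : HatVertex G₁ G₂, ∑ c : Fin k,
      if glauberStep G₁ G₂ σ v c = τ then (1 : ℝ) else 0) /
    ((Fintype.card (HatVertex G₁ G₂) : ℝ) * (k : ℝ))

/-- The uniform distribution over the proper vertex `k`-colorings of `Ĝ`,
viewed as a distribution on all of `{1,…,k}^{V̂}`. -/
def uniformProper {V : Type} [Fintype V] (G₁ G₂ : SimpleGraph V) (k : ℕ) :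
    (HatVertex G₁ G₂ → Fin k) → ℝ :=
  fun σ => if IsProperVertexColoring (hatG G₁ G₂) σ then
      (1 : ℝ) / (Nat.card {τ : HatVertex G₁ G₂ → Fin k //
        IsProperVertexColoring (hatG G₁ G₂) τ} : ℝ)
    else 0

/-- The graph of `(σ(v), c)`-alternating steps. -/
def clusterGraph {α β : Type} (H : SimpleGraph α) (σ : α → β) (v : α) (c : β) :
    SimpleGraph α where
  Adj w w' := H.Adj w w' ∧ ((σ w = σ v ∧ σ w' = c) ∨ (σ w = c ∧ σ w' = σ v))
  symm := by
    constructor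
    rintro w w' ⟨h1, h2⟩
    exact ⟨h1.symm, by tauto⟩
  loopless := by
    constructor
    rintro w ⟨h1, -⟩
    exact H.irrefl h1

/-- The cluster `S_σ(v,c)`: the set of vertices reachable from `v` by a
`(σ(v), c)`-alternating path, with `S_σ(v, σ(v)) = {v}`. -/
def cluster {α β : Type} (H : SimpleGraph α) (σ : α → β) (v : α) (c : β) : Set α :=
  if c = σ v then {v} else {w | (clusterGraph H σ v c).Reachable v w}

/-- The coloring obtained by interchanging the colors `σ(v)` and `c` on the cluster
`S_σ(v,c)`. -/
def flipColoring {α β : Type} (H : SimpleGraph α) (σ : α → β) (v : α) (c : β) : α → β :=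
  fun w => if w ∈ cluster H σ v c then
      if σ w = σ v then c else if σ w = c then σ v else σ w
    else σ w

/-- The transition matrix of the flip dynamics with flip parameters `p`. -/
def flipP {α : Type} [Fintype α] (H : SimpleGraph α) (k : ℕ) (p : ℕ → ℝ)
    (σ τ : α → Fin k) : ℝ :=
  (∑ v : α, ∑ c : Fin k,
      ((p (Nat.card (cluster H σ v c)) / (Nat.card (cluster H σ v c) : ℝ)) *
          (if flipColoring H σ v c = τ then (1 : ℝ) else 0) +
        (1 - p (Nat.card (cluster H σ v c)) / (Nat.card (cluster H σ v c) : ℝ)) *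
          (if σ = τ then (1 : ℝ) else 0))) /
    ((Fintype.card α : ℝ) * (k : ℝ))

/-- The explicit flip parameters `P₁ = 1, P₂ = 137/650, P₃ = 77/650, P₄ = 47/650,
P₅ = 27/650, P₆ = 12/650`, and `P_i = 0` for `i ≥ 7`. -/
def flipParams : ℕ → ℝ := fun i =>
  if i = 1 then 1
  else if i = 2 then 137 / 650
  else if i = 3 then 77 / 650
  else if i = 4 then 47 / 650
  else if i = 5 then 27 / 650
  else if i = 6 then 12 / 650
  else 0

/-- The set of (not necessarily proper) `L`-colorings. -/
def ListColorings {α : Type} (L : α → Finset ℕ) : Type :=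
  {f : α → ℕ // ∀ v, f v ∈ L v}

instance {α : Type} [Finite α] (L : α → Finset ℕ) : Finite (ListColorings L) :=
  Finite.of_injective
    (fun f => (fun v => (⟨f.1 v, f.2 v⟩ : {c : ℕ // c ∈ L v})))
    (by
      intro f g h
      apply Subtype.ext
      funext v
      exact congrArg Subtype.val (congrFun h v))

instance {α : Type} [Fintype α] (L : α → Finset ℕ) : Fintype (ListColorings L) :=
  Fintype.ofFinite _

/-- The `i`-th smallest element of a finite set of natural numbers (0-indexed). -/
def nthColor (L : Finset ℕ) (i : ℕ) : ℕ :=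
  (L.sort (· ≤ ·)).getD i 0

/-- A cluster is flippable if both of its colors belong to the list of every vertex in it. -/
def ListFlippable {α : Type} (H : SimpleGraph α) (L : α → Finset ℕ) (σ : α → ℕ)
    (v : α) (c : ℕ) : Prop :=
  ∀ w ∈ cluster H σ v c, σ v ∈ L w ∧ c ∈ L w

/-- The transition matrix of the flip dynamics for `L`-list colorings. -/
def listFlipP {α : Type} [Fintype α] (H : SimpleGraph α) (L : α → Finset ℕ) (k : ℕ)
    (p : ℕ → ℝ) (σ τ : ListColorings L) : ℝ :=
  (∑ v : α, ∑ i : Fin k,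
      ((if ListFlippable H L σ.1 v (nthColor (L v) i) then
          p (Nat.card (cluster H σ.1 v (nthColor (L v) i))) /
            (Nat.card (cluster H σ.1 v (nthColor (L v) i)) : ℝ)
        else 0) *
          (if flipColoring H σ.1 v (nthColor (L v) i) = τ.1 then (1 : ℝ) else 0) +
        (1 - (if ListFlippable H L σ.1 v (nthColor (L v) i) then
          p (Nat.card (cluster H σ.1 v (nthColor (L v) i))) /
            (Nat.card (cluster H σ.1 v (nthColor (L v) i)) : ℝ)
        else 0)) *
          (if σ = τ then (1 : ℝ) else 0))) /
    ((Fintype.card α : ℝ) * (k : ℝ))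

/-- The uniform distribution over the proper `L`-colorings. -/
def uniformProperList {α : Type} [Fintype α] (H : SimpleGraph α) (L : α → Finset ℕ) :
    ListColorings L → ℝ :=
  fun σ => if IsProperVertexColoring H σ.1 then
      (1 : ℝ) / (Nat.card {τ : ListColorings L // IsProperVertexColoring H τ.1} : ℝ)
    else 0

/-- Two states differ in exactly one coordinate. -/
def AdjOne {N S : Type} (σ ξ : N → S) : Prop :=
  ∃ i, σ i ≠ ξ i ∧ ∀ j, j ≠ i → σ j = ξ j

/-- The set of total `Φ`-lengths of simple paths from `σ` to `ξ` inside `Ω` whose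
consecutive states differ in exactly one coordinate. -/
def PathSums {N S : Type} (Ω : Finset (N → S)) (Φ : (N → S) → (N → S) → ℕ)
    (σ ξ : N → S) : Set ℕ :=
  {s | ∃ (ℓ : ℕ) (η : Fin (ℓ + 1) → (N → S)),
    (∀ i, η i ∈ Ω) ∧ Function.Injective η ∧
    η 0 = σ ∧ η (Fin.last ℓ) = ξ ∧
    (∀ i : Fin ℓ, AdjOne (η i.castSucc) (η i.succ)) ∧
    s = ∑ i : Fin ℓ, Φ (η i.castSucc) (η i.succ)}

/-- A single move of the Glauber dynamics: recolor one vertex with a color not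
appearing in its `Ĝ`-neighborhood. -/
def GlauberMove {V : Type} (G₁ G₂ : SimpleGraph V) {k : ℕ}
    (σ τ : HatVertex G₁ G₂ → Fin k) : Prop :=
  ∃ (v : HatVertex G₁ G₂) (c : Fin k),
    (∀ w, (hatG G₁ G₂).Adj v w → σ w ≠ c) ∧ τ = Function.update σ v c

end


/-!
Path coupling: both chains update the same site `w`, and when `w` is a `Ĝ`-neighbour of the
disagreement vertex `v` the proposals `X v` and `Y v` are matched by a transposition. Then a
disagreement is created only when `w ∼ v` and `Y v` is proposed (cost `W(w)`), and the old one
disappears when `w = v` is updated with a colour not blocked on `N(v)`. Hence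
`m k · E[Ĥ'] ≤ (m k - k + deg v) W(v) + Σ_{w ∼ v} W(w)`. Since an edge of `Gᵢ` meets at most
`2Δ - 2` other edges of `Gᵢ`, `deg v · W(v) + Σ_{w ∼ v} W(w) ≤ 6Δ W(v) < 6k W(v) / (6 + δ)`.
-/

noncomputable section UniformPushforward

variable {ι Ω : Type} [Fintype ι] [DecidableEq Ω]

def uniformPushforward (f : ι → Ω) : Ω → ℝ :=
  fun a => (∑ i, if f i = a then (1 : ℝ) else 0) / Fintype.card ι

def uniformCoupling (f g : ι → Ω) : Ω × Ω → ℝ :=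
  uniformPushforward fun i => (f i, g i)

lemma sum_uniformPushforward_mul [Fintype Ω] (f : ι → Ω) (F : Ω → ℝ) :
    ∑ a, uniformPushforward f a * F a = (∑ i, F (f i)) / Fintype.card ι := by
  simp only [uniformPushforward, div_mul_eq_mul_div, ← Finset.sum_div, Finset.sum_mul,
    ite_mul, one_mul, zero_mul]
  rw [Finset.sum_comm]
  simp

lemma uniformPushforward_comp_equiv (f : ι → Ω) (e : ι ≃ ι) :
    uniformPushforward (f ∘ e) = uniformPushforward f := by
  ext a
  simp only [uniformPushforward, Function.comp_apply,
    e.sum_comp (fun i => if f i = a then (1 : ℝ) else 0)]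

lemma isCoupling_uniformCoupling [Fintype Ω] (f g : ι → Ω) :
    IsCoupling (uniformCoupling f g) (uniformPushforward f) (uniformPushforward g) := by
  refine ⟨fun q => by unfold uniformCoupling uniformPushforward; positivity,
    fun a => ?_, fun b => ?_⟩
  · simp only [uniformCoupling, uniformPushforward, ← Finset.sum_div, Prod.mk.injEq]
    rw [Finset.sum_comm]
    simp [ite_and]
  · simp only [uniformCoupling, uniformPushforward, ← Finset.sum_div, Prod.mk.injEq]
    rw [Finset.sum_comm]
    simp [ite_and]

end UniformPushforward

lemma SimpleGraph.card_add_two_le_degree_add_degree {V : Type} [Fintype V] [DecidableEq V]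
    (G : SimpleGraph V) [DecidableRel G.Adj] {a b : V} (hab : G.Adj a b) {s : Finset (Sym2 V)}
    (hs : ∀ f ∈ s, f ∈ G.edgeSet ∧ f ≠ s(a, b) ∧ (a ∈ f ∨ b ∈ f)) :
    s.card + 2 ≤ G.degree a + G.degree b := by
  have ha : s(a, b) ∈ G.incidenceFinset a :=
    (G.mem_incidenceFinset _ _).2 ⟨hab, Sym2.mem_mk_left a b⟩
  have hb : s(a, b) ∈ G.incidenceFinset b :=
    (G.mem_incidenceFinset _ _).2 ⟨hab, Sym2.mem_mk_right a b⟩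
  have hsub : s ⊆ (G.incidenceFinset a).erase s(a, b) ∪ (G.incidenceFinset b).erase s(a, b) := by
    intro f hf
    obtain ⟨hfG, hne, haf | hbf⟩ := hs f hf
    · exact Finset.mem_union_left _
        (Finset.mem_erase.2 ⟨hne, (G.mem_incidenceFinset _ _).2 ⟨hfG, haf⟩⟩)
    · exact Finset.mem_union_right _
        (Finset.mem_erase.2 ⟨hne, (G.mem_incidenceFinset _ _).2 ⟨hfG, hbf⟩⟩)
  have hcard := (Finset.card_le_card hsub).trans (Finset.card_union_le _ _)
  have hpos_a := Finset.card_pos.2 ⟨_, ha⟩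
  have hpos_b := Finset.card_pos.2 ⟨_, hb⟩
  rw [Finset.card_erase_of_mem ha, Finset.card_erase_of_mem hb] at hcard
  simp only [G.card_incidenceFinset_eq_degree] at hcard hpos_a hpos_b
  omega

section HatNeighborhood

variable {V : Type} {G₁ G₂ : SimpleGraph V} {Δ : ℕ}

lemma hatWeight_eq_add (w : HatVertex G₁ G₂) :
    hatWeight G₁ G₂ w =
      (if w.1 ∈ G₁.edgeSet then 1 else 0) + (if w.1 ∈ G₂.edgeSet then 1 else 0) := by
  rcases w with ⟨e, he | he⟩ <;> by_cases h : e ∈ G₁.edgeSet <;> by_cases h' : e ∈ G₂.edgeSet <;>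
    simp_all [hatWeight]

lemma one_le_hatWeight (w : HatVertex G₁ G₂) :
    1 ≤ hatWeight G₁ G₂ w := by
  unfold hatWeight
  split_ifs <;> simp

variable [Fintype V]

lemma card_hatNeighbors_mem_edgeSet_add_two_le {G : SimpleGraph V}
    (hG : ∀ x : V, (G.neighborSet x).ncard ≤ Δ) {v : HatVertex G₁ G₂} (hv : v.1 ∈ G.edgeSet) :
    (((hatG G₁ G₂).neighborFinset v).filter fun w => w.1 ∈ G.edgeSet).card + 2 ≤ 2 * Δ := by
  obtain ⟨e, he⟩ := v
  induction e using Sym2.inductionOn with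
  | hf a b =>
    set N := ((hatG G₁ G₂).neighborFinset ⟨s(a, b), he⟩).filter fun w => w.1 ∈ G.edgeSet
    have hdeg : ∀ x, G.degree x ≤ Δ := fun x => by
      have := hG x
      rwa [Set.ncard_eq_toFinset_card'] at this
    have hmeet : ∀ f ∈ N.image Subtype.val, f ∈ G.edgeSet ∧ f ≠ s(a, b) ∧ (a ∈ f ∨ b ∈ f) := by
      intro f hf
      obtain ⟨w, hw, rfl⟩ := Finset.mem_image.1 hf
      rw [Finset.mem_filter, SimpleGraph.mem_neighborFinset] at hw
      obtain ⟨⟨hne, ⟨x, hxv, hxw⟩, -⟩, hwG⟩ := hw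
      refine ⟨hwG, fun h => hne (Subtype.ext h).symm, ?_⟩
      rcases Sym2.mem_iff.1 hxv with rfl | rfl
      · exact Or.inl hxw
      · exact Or.inr hxw
    have hcard := G.card_add_two_le_degree_add_degree hv hmeet
    rw [Finset.card_image_of_injective _ Subtype.val_injective] at hcard
    linarith [hdeg a, hdeg b]

lemma degree_mul_hatWeight_add_sum_hatWeight_le (h₁ : ∀ x : V, (G₁.neighborSet x).ncard ≤ Δ)
    (h₂ : ∀ x : V, (G₂.neighborSet x).ncard ≤ Δ) (v : HatVertex G₁ G₂) :
    (hatG G₁ G₂).degree v * hatWeight G₁ G₂ v +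
        ∑ w ∈ (hatG G₁ G₂).neighborFinset v, hatWeight G₁ G₂ w ≤
      6 * Δ * hatWeight G₁ G₂ v := by
  rw [← SimpleGraph.card_neighborFinset_eq_degree]
  set N := (hatG G₁ G₂).neighborFinset v
  have hsum : ∑ w ∈ N, hatWeight G₁ G₂ w =
      (N.filter fun w => w.1 ∈ G₁.edgeSet).card + (N.filter fun w => w.1 ∈ G₂.edgeSet).card := by
    simp only [hatWeight_eq_add, Finset.sum_add_distrib, Finset.card_filter]
  have hcover : N.card ≤
      (N.filter fun w => w.1 ∈ G₁.edgeSet).card + (N.filter fun w => w.1 ∈ G₂.edgeSet).card := by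
    refine (Finset.card_le_card fun w hw => ?_).trans (Finset.card_union_le _ _)
    exact Finset.mem_union.2 (w.2.imp (fun h => Finset.mem_filter.2 ⟨hw, h⟩)
      fun h => Finset.mem_filter.2 ⟨hw, h⟩)
  have hsub₁ : v.1 ∉ G₂.edgeSet → N.card ≤ (N.filter fun w => w.1 ∈ G₁.edgeSet).card :=
    fun hv => Finset.card_le_card fun w hw => Finset.mem_filter.2
      ⟨hw, (((hatG G₁ G₂).mem_neighborFinset v w).1 hw).2.2.elim (·.2) fun h => (hv h.1).elim⟩
  have hsub₂ : v.1 ∉ G₁.edgeSet → N.card ≤ (N.filter fun w => w.1 ∈ G₂.edgeSet).card :=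
    fun hv => Finset.card_le_card fun w hw => Finset.mem_filter.2
      ⟨hw, (((hatG G₁ G₂).mem_neighborFinset v w).1 hw).2.2.elim (fun h => (hv h.1).elim) (·.2)⟩
  have hle₁ := Finset.card_filter_le N fun w => w.1 ∈ G₁.edgeSet
  have hle₂ := Finset.card_filter_le N fun w => w.1 ∈ G₂.edgeSet
  have hc₁ : v.1 ∈ G₁.edgeSet → (N.filter fun w => w.1 ∈ G₁.edgeSet).card + 2 ≤ 2 * Δ :=
    card_hatNeighbors_mem_edgeSet_add_two_le h₁
  have hc₂ : v.1 ∈ G₂.edgeSet → (N.filter fun w => w.1 ∈ G₂.edgeSet).card + 2 ≤ 2 * Δ :=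
    card_hatNeighbors_mem_edgeSet_add_two_le h₂
  have hv : v.1 ∈ G₁.edgeSet ∨ v.1 ∈ G₂.edgeSet := v.2
  rw [hsum, hatWeight_eq_add v]
  by_cases hv₁ : v.1 ∈ G₁.edgeSet <;> by_cases hv₂ : v.1 ∈ G₂.edgeSet
  all_goals simp only [hv₁, hv₂, if_true, if_false, not_true_eq_false, not_false_eq_true,
    true_implies, false_implies, or_self] at *
  all_goals omega

end HatNeighborhood

section GlauberStep

variable {V : Type} {G₁ G₂ : SimpleGraph V} {k : ℕ}

lemma glauberStep_of_not_free {σ : HatVertex G₁ G₂ → Fin k} {w : HatVertex G₁ G₂} {c : Fin k}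
    (h : ¬ ∀ u, (hatG G₁ G₂).Adj w u → σ u ≠ c) : glauberStep G₁ G₂ σ w c = σ :=
  if_neg h

lemma glauberStep_apply_of_ne (σ : HatVertex G₁ G₂ → Fin k) {w x : HatVertex G₁ G₂} (c : Fin k)
    (hx : x ≠ w) : glauberStep G₁ G₂ σ w c x = σ x := by
  unfold glauberStep
  split_ifs
  · exact Function.update_of_ne hx _ _
  · rfl

lemma glauberStep_apply_self (σ : HatVertex G₁ G₂ → Fin k) (w : HatVertex G₁ G₂) (c : Fin k) :
    glauberStep G₁ G₂ σ w c w = if ∀ u, (hatG G₁ G₂).Adj w u → σ u ≠ c then c else σ w := by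
  unfold glauberStep
  split_ifs <;> simp

end GlauberStep

lemma glauberP_eq_uniformPushforward {V : Type} [Fintype V] (G₁ G₂ : SimpleGraph V) (k : ℕ)
    (σ : HatVertex G₁ G₂ → Fin k) :
    glauberP G₁ G₂ k σ = uniformPushforward fun p : HatVertex G₁ G₂ × Fin k =>
      glauberStep G₁ G₂ σ p.1 p.2 := by
  ext τ
  rw [glauberP, uniformPushforward, Fintype.sum_prod_type, Fintype.card_prod, Fintype.card_fin,
    Nat.cast_mul]

section HammingDistance

variable {V : Type} [Fintype V] {G₁ G₂ : SimpleGraph V} {k : ℕ}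

lemma hatH_eq_sum_of_eqOn_compl {σ τ : HatVertex G₁ G₂ → Fin k} (s : Finset (HatVertex G₁ G₂))
    (h : ∀ x ∉ s, σ x = τ x) :
    hatH G₁ G₂ σ τ = ∑ x ∈ s, if σ x ≠ τ x then (hatWeight G₁ G₂ x : ℝ) else 0 :=
  (Finset.sum_subset (Finset.subset_univ s) fun x _ hx => if_neg (not_not_intro (h x hx))).symm

lemma hatH_le_sum_of_eqOn_compl {σ τ : HatVertex G₁ G₂ → Fin k} (s : Finset (HatVertex G₁ G₂))
    (h : ∀ x ∉ s, σ x = τ x) : hatH G₁ G₂ σ τ ≤ ∑ x ∈ s, (hatWeight G₁ G₂ x : ℝ) := by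
  rw [hatH_eq_sum_of_eqOn_compl s h]
  refine Finset.sum_le_sum fun x _ => ?_
  split_ifs
  · exact le_rfl
  · positivity

lemma hatH_eq_hatWeight {σ τ : HatVertex G₁ G₂ → Fin k} {v : HatVertex G₁ G₂}
    (hv : σ v ≠ τ v) (h : ∀ x, x ≠ v → σ x = τ x) : hatH G₁ G₂ σ τ = hatWeight G₁ G₂ v := by
  rw [hatH_eq_sum_of_eqOn_compl {v} (fun x hx => h x (Finset.notMem_singleton.1 hx)),
    Finset.sum_singleton, if_pos hv]

end HammingDistance

noncomputable section Coupling

variable {V : Type} {G₁ G₂ : SimpleGraph V} {k : ℕ}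

def neighborSwap (X Y : HatVertex G₁ G₂ → Fin k) (v w : HatVertex G₁ G₂) : Equiv.Perm (Fin k) :=
  if (hatG G₁ G₂).Adj v w then Equiv.swap (X v) (Y v) else 1

variable {X Y : HatVertex G₁ G₂ → Fin k} {v : HatVertex G₁ G₂}

lemma glauberStep_neighborSwap_apply_self (hXY : ∀ w, w ≠ v → X w = Y w)
    {w : HatVertex G₁ G₂} (hw : w ≠ v) {c : Fin k} (hc : ¬ ((hatG G₁ G₂).Adj v w ∧ c = Y v)) :
    glauberStep G₁ G₂ X w c w = glauberStep G₁ G₂ Y w (neighborSwap X Y v w c) w := by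
  by_cases hcX : (hatG G₁ G₂).Adj v w ∧ c = X v
  · obtain ⟨hadj, rfl⟩ := hcX
    have hswap : neighborSwap X Y v w (X v) = Y v := by simp [neighborSwap, hadj]
    rw [hswap, glauberStep_of_not_free fun h => h v hadj.symm rfl,
      glauberStep_of_not_free fun h => h v hadj.symm rfl, hXY w hw]
  · have hswap : neighborSwap X Y v w c = c := by
      unfold neighborSwap
      split_ifs with hadj
      · exact Equiv.swap_apply_of_ne_of_ne (fun h => hcX ⟨hadj, h⟩) fun h => hc ⟨hadj, h⟩
      · rfl
    have hcolor : ∀ u, (hatG G₁ G₂).Adj w u → (X u ≠ c ↔ Y u ≠ c) := by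
      intro u hu
      rcases eq_or_ne u v with rfl | huv
      · exact iff_of_true (fun h => hcX ⟨hu.symm, h.symm⟩) fun h => hc ⟨hu.symm, h.symm⟩
      · rw [hXY u huv]
    rw [hswap, glauberStep_apply_self, glauberStep_apply_self, hXY w hw,
      forall_congr' fun u => imp_congr_right (hcolor u)]

variable [Fintype V]

lemma hatH_glauberStep_self_le (hXY : ∀ w, w ≠ v → X w = Y w) (c : Fin k) :
    hatH G₁ G₂ (glauberStep G₁ G₂ X v c) (glauberStep G₁ G₂ Y v c) ≤
      if c ∈ ((hatG G₁ G₂).neighborFinset v).image X then (hatWeight G₁ G₂ v : ℝ) else 0 := by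
  have hXY' : ∀ u, (hatG G₁ G₂).Adj v u → X u = Y u := fun u hu => hXY u hu.ne'
  by_cases hfree : ∀ u, (hatG G₁ G₂).Adj v u → X u ≠ c
  · have hfreeY : ∀ u, (hatG G₁ G₂).Adj v u → Y u ≠ c := fun u hu => hXY' u hu ▸ hfree u hu
    refine (hatH_le_sum_of_eqOn_compl ∅ fun x _ => ?_).trans ?_
    · rcases eq_or_ne x v with rfl | hx
      · rw [glauberStep_apply_self, glauberStep_apply_self, if_pos hfree, if_pos hfreeY]
      · rw [glauberStep_apply_of_ne _ _ hx, glauberStep_apply_of_ne _ _ hx, hXY x hx]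
    · rw [Finset.sum_empty]
      split_ifs <;> positivity
  · have hfreeY : ¬ ∀ u, (hatG G₁ G₂).Adj v u → Y u ≠ c := fun h =>
      hfree fun u hu => hXY' u hu ▸ h u hu
    have hc : c ∈ ((hatG G₁ G₂).neighborFinset v).image X := by
      push Not at hfree
      obtain ⟨u, hu, rfl⟩ := hfree
      exact Finset.mem_image_of_mem X ((hatG G₁ G₂).mem_neighborFinset v u |>.2 hu)
    rw [glauberStep_of_not_free hfree, glauberStep_of_not_free hfreeY, if_pos hc]
    simpa using hatH_le_sum_of_eqOn_compl {v} fun x hx => hXY x (Finset.notMem_singleton.1 hx)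

lemma hatH_glauberStep_neighborSwap_le (hXY : ∀ w, w ≠ v → X w = Y w)
    {w : HatVertex G₁ G₂} (hw : w ≠ v) (c : Fin k) :
    hatH G₁ G₂ (glauberStep G₁ G₂ X w c) (glauberStep G₁ G₂ Y w (neighborSwap X Y v w c)) ≤
      hatWeight G₁ G₂ v +
        if (hatG G₁ G₂).Adj v w ∧ c = Y v then (hatWeight G₁ G₂ w : ℝ) else 0 := by
  have hoff : ∀ x, x ≠ v → x ≠ w → glauberStep G₁ G₂ X w c x =
      glauberStep G₁ G₂ Y w (neighborSwap X Y v w c) x := fun x hxv hxw => by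
    rw [glauberStep_apply_of_ne _ _ hxw, glauberStep_apply_of_ne _ _ hxw, hXY x hxv]
  split_ifs with hc
  · refine (hatH_le_sum_of_eqOn_compl {v, w} fun x hx => ?_).trans_eq
      (Finset.sum_pair hw.symm)
    simp only [Finset.mem_insert, Finset.mem_singleton, not_or] at hx
    exact hoff x hx.1 hx.2
  · refine (hatH_le_sum_of_eqOn_compl {v} fun x hx => ?_).trans_eq (by simp)
    rcases eq_or_ne x w with rfl | hxw
    · exact glauberStep_neighborSwap_apply_self hXY hw hc
    · exact hoff x (Finset.notMem_singleton.1 hx) hxw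

lemma sum_hatH_glauberStep_neighborSwap_le (hXY : ∀ w, w ≠ v → X w = Y w)
    (w : HatVertex G₁ G₂) :
    ∑ c, hatH G₁ G₂ (glauberStep G₁ G₂ X w c) (glauberStep G₁ G₂ Y w (neighborSwap X Y v w c)) ≤
      k * hatWeight G₁ G₂ v + (if (hatG G₁ G₂).Adj v w then (hatWeight G₁ G₂ w : ℝ) else 0) -
        if w = v then ((k : ℝ) - (hatG G₁ G₂).degree v) * hatWeight G₁ G₂ v else 0 := by
  rcases eq_or_ne w v with rfl | hw
  · have hswap : neighborSwap X Y w w = 1 := if_neg (hatG G₁ G₂).irrefl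
    calc _ ≤ ∑ c, if c ∈ ((hatG G₁ G₂).neighborFinset w).image X then
            (hatWeight G₁ G₂ w : ℝ) else 0 :=
          Finset.sum_le_sum fun c _ => by simpa [hswap] using hatH_glauberStep_self_le hXY c
      _ = (((hatG G₁ G₂).neighborFinset w).image X).card * hatWeight G₁ G₂ w := by
          rw [Finset.sum_ite_mem, Finset.univ_inter, Finset.sum_const, nsmul_eq_mul]
      _ ≤ (hatG G₁ G₂).degree w * hatWeight G₁ G₂ w := by
          gcongr
          exact Finset.card_image_le
      _ = _ := by simp only [if_true, if_neg (hatG G₁ G₂).irrefl]; ring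
  · calc _ ≤ ∑ c : Fin k, ((hatWeight G₁ G₂ v : ℝ) +
            if (hatG G₁ G₂).Adj v w ∧ c = Y v then (hatWeight G₁ G₂ w : ℝ) else 0) :=
          Finset.sum_le_sum fun c _ => hatH_glauberStep_neighborSwap_le hXY hw c
      _ = _ := by
          simp [Finset.sum_add_distrib, hw, ite_and, Finset.sum_ite_eq']

lemma sum_prod_hatH_glauberStep_neighborSwap_le (hXY : ∀ w, w ≠ v → X w = Y w) :
    ∑ p : HatVertex G₁ G₂ × Fin k, hatH G₁ G₂ (glauberStep G₁ G₂ X p.1 p.2)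
        (glauberStep G₁ G₂ Y p.1 (neighborSwap X Y v p.1 p.2)) ≤
      (Fintype.card (HatVertex G₁ G₂) * k - k + (hatG G₁ G₂).degree v) * hatWeight G₁ G₂ v +
        ∑ w ∈ (hatG G₁ G₂).neighborFinset v, (hatWeight G₁ G₂ w : ℝ) := by
  rw [Fintype.sum_prod_type]
  refine (Finset.sum_le_sum fun w _ => sum_hatH_glauberStep_neighborSwap_le hXY w).trans_eq ?_
  rw [Finset.sum_sub_distrib, Finset.sum_add_distrib, Finset.sum_ite_eq',
    if_pos (Finset.mem_univ v), ← Finset.sum_filter, ← SimpleGraph.neighborFinset_eq_filter,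
    Finset.sum_const, Finset.card_univ, nsmul_eq_mul]
  ring

end Coupling

lemma sum_prod_hatH_glauberStep_neighborSwap_le_contraction {V : Type} [Fintype V]
    {G₁ G₂ : SimpleGraph V} {Δ k : ℕ} {δ : ℝ} (hδ : 0 < δ)
    (h₁ : ∀ x : V, (G₁.neighborSet x).ncard ≤ Δ) (h₂ : ∀ x : V, (G₂.neighborSet x).ncard ≤ Δ)
    (hk : (6 + δ) * (Δ : ℝ) < k) {X Y : HatVertex G₁ G₂ → Fin k} {v : HatVertex G₁ G₂}
    (hXY : ∀ w, w ≠ v → X w = Y w) :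
    ∑ p : HatVertex G₁ G₂ × Fin k, hatH G₁ G₂ (glauberStep G₁ G₂ X p.1 p.2)
        (glauberStep G₁ G₂ Y p.1 (neighborSwap X Y v p.1 p.2)) ≤
      (1 - δ / ((6 + δ) * Fintype.card (HatVertex G₁ G₂))) * hatWeight G₁ G₂ v *
        (Fintype.card (HatVertex G₁ G₂) * k) := by
  have hnbhd : ((hatG G₁ G₂).degree v * hatWeight G₁ G₂ v +
      ∑ w ∈ (hatG G₁ G₂).neighborFinset v, hatWeight G₁ G₂ w : ℕ) ≤
      (6 * Δ * hatWeight G₁ G₂ v : ℝ) := by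
    exact_mod_cast degree_mul_hatWeight_add_sum_hatWeight_le h₁ h₂ v
  push_cast at hnbhd
  have hm : (0 : ℝ) < Fintype.card (HatVertex G₁ G₂) := by
    exact_mod_cast Fintype.card_pos_iff.2 ⟨v⟩
  have hW : (1 : ℝ) ≤ hatWeight G₁ G₂ v := by exact_mod_cast one_le_hatWeight v
  have hΔ : 6 * Δ * (hatWeight G₁ G₂ v : ℝ) ≤ 6 * k / (6 + δ) * hatWeight G₁ G₂ v := by
    gcongr
    rw [le_div_iff₀ (by positivity)]
    linarith
  have hrhs : (1 - δ / ((6 + δ) * Fintype.card (HatVertex G₁ G₂))) * hatWeight G₁ G₂ v *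
      (Fintype.card (HatVertex G₁ G₂) * k) =
      (Fintype.card (HatVertex G₁ G₂) * k - k + 6 * k / (6 + δ)) * hatWeight G₁ G₂ v := by
    field_simp
    ring
  rw [hrhs]
  linarith [sum_prod_hatH_glauberStep_neighborSwap_le (G₁ := G₁) (G₂ := G₂) hXY]

/-- If `k > (6+δ)Δ`, then for colorings `X, Y` differing at exactly one
vertex there is a coupling of the one-step Glauber transition distributions under which
`E[Ĥ(X′,Y′)] ≤ (1 − δ/((6+δ)m))·Ĥ(X,Y)`. -/
theorem glauber_coupling_contraction (δ : ℝ) (hδ : 0 < δ)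
    {V : Type} [Fintype V] [DecidableEq V]
    (G₁ G₂ : SimpleGraph V) (Δ k : ℕ)
    (h₁ : ∀ v : V, (G₁.neighborSet v).ncard ≤ Δ)
    (h₂ : ∀ v : V, (G₂.neighborSet v).ncard ≤ Δ)
    (hk : (6 + δ) * (Δ : ℝ) < (k : ℝ))
    (X Y : HatVertex G₁ G₂ → Fin k) (v : HatVertex G₁ G₂)
    (hv : X v ≠ Y v) (hXY : ∀ w, w ≠ v → X w = Y w) :
    ∃ γ : ((HatVertex G₁ G₂ → Fin k) × (HatVertex G₁ G₂ → Fin k)) → ℝ,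
      IsCoupling γ (glauberP G₁ G₂ k X) (glauberP G₁ G₂ k Y) ∧
      ∑ q : (HatVertex G₁ G₂ → Fin k) × (HatVertex G₁ G₂ → Fin k),
          γ q * hatH G₁ G₂ q.1 q.2 ≤
        (1 - δ / ((6 + δ) * (Fintype.card (HatVertex G₁ G₂) : ℝ))) * hatH G₁ G₂ X Y := by
  let stepX (p : HatVertex G₁ G₂ × Fin k) := glauberStep G₁ G₂ X p.1 p.2
  let stepY (p : HatVertex G₁ G₂ × Fin k) := glauberStep G₁ G₂ Y p.1 p.2
  let π := Equiv.prodShear (Equiv.refl _) (neighborSwap X Y v)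
  refine ⟨uniformCoupling stepX (stepY ∘ π), ?_, ?_⟩
  · rw [glauberP_eq_uniformPushforward, glauberP_eq_uniformPushforward,
      ← uniformPushforward_comp_equiv stepY π]
    exact isCoupling_uniformCoupling _ _
  · have hmk : (0 : ℝ) < Fintype.card (HatVertex G₁ G₂ × Fin k) :=
      Nat.cast_pos.2 (Fintype.card_pos_iff.2 ⟨(v, X v)⟩)
    rw [uniformCoupling, sum_uniformPushforward_mul, hatH_eq_hatWeight hv hXY, div_le_iff₀ hmk,
      Fintype.card_prod, Fintype.card_fin, Nat.cast_mul]
    exact sum_prod_hatH_glauberStep_neighborSwap_le_contraction hδ h₁ h₂ hk hXY
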